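/- arXiv:2104.08115 — 2 statements merged into one kernel-verified Lean document; each statement's English description precedes it below -/
import Mathlib

section
/- For all x̂=(x₂,x₃) and ŷ=(y₂,y₃) in ℝ² with ρ=d̃(x̂,ŷ), the point ξ̂=((x₂+y₂)/2, (x₃+3y₃)/4) satisfies d̃(ξ̂,ŷ)=ρ/2 and d̃(ξ̂,x̂) ≤ (√3/2)ρ. -/
open MeasureTheory Filter

noncomputable section

/-- The quantity `D(x, ŷ)` from the double layer potential kernels. -/
def Dden (x : ℝ × ℝ × ℝ) (y : ℝ × ℝ) : ℝ :=
  (x.1 ^ 2 + (x.2.1 - y.1) ^ 2) ^ 2 + 16 * (x.2.2 - y.2 + (1 / 2) * y.1 * x.1) ^ 2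

/-- The kernel `k₁(x, ŷ)`. -/
def k1 (c : ℝ) (x : ℝ × ℝ × ℝ) (y : ℝ × ℝ) : ℝ :=
  2 * c * (x.1 ^ 2 + (x.2.1 - y.1) ^ 2) * x.1 * Dden x y ^ (-(3 : ℝ) / 2)

/-- The kernel `k(x, ŷ)`. -/
def kker (c : ℝ) (x : ℝ × ℝ × ℝ) (y : ℝ × ℝ) : ℝ :=
  8 * c * (x.2.1 - y.1) * (x.2.2 - y.2 + (1 / 2) * y.1 * x.1) * Dden x y ^ (-(3 : ℝ) / 2)

/-- The homogeneous distance `d̃` on the vertical plane `Π ≅ ℝ²`. -/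
def dt (a b : ℝ × ℝ) : ℝ := ((a.1 - b.1) ^ 4 + 16 * (a.2 - b.2) ^ 2) ^ ((1 : ℝ) / 4)

/-- The ball of `d̃` of radius `r` centered at `a`. -/
def bhat (r : ℝ) (a : ℝ × ℝ) : Set (ℝ × ℝ) := {b | dt a b < r}

/-- The "midpoint" `ξ̂ = ((x₂+y₂)/2, (x₃+3y₃)/4)` satisfies
`d̃(ξ̂, ŷ) = ρ/2` and `d̃(ξ̂, x̂) ≤ (√3/2) ρ`, where `ρ = d̃(x̂, ŷ)`. -/
theorem stmt5 (x y : ℝ × ℝ) :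
    dt ((x.1 + y.1) / 2, (x.2 + 3 * y.2) / 4) y = dt x y / 2 ∧
    dt ((x.1 + y.1) / 2, (x.2 + 3 * y.2) / 4) x ≤ (Real.sqrt 3 / 2) * dt x y := by
  unfold dt
  set A : ℝ := x.1 - y.1 with hA
  set B : ℝ := x.2 - y.2 with hB
  set s : ℝ := A ^ 4 + 16 * B ^ 2 with hsdef
  clear_value s
  clear_value A B
  have hs : (0 : ℝ) ≤ s := by rw [hsdef]; positivity
  have h16 : ((16 : ℝ)) ^ ((1 : ℝ) / 4) = 2 := by
    rw [show (16 : ℝ) = 2 ^ (4 : ℕ) by norm_num, ← Real.rpow_natCast,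
      ← Real.rpow_mul (by norm_num : (0:ℝ) ≤ 2)]
    norm_num
  have h9 : ((9 : ℝ)) ^ ((1 : ℝ) / 4) = Real.sqrt 3 := by
    rw [show (9 : ℝ) = 3 ^ (2 : ℕ) by norm_num, ← Real.rpow_natCast,
      ← Real.rpow_mul (by norm_num : (0:ℝ) ≤ 3), Real.sqrt_eq_rpow]
    norm_num
  constructor
  · have e1 : ((x.1 + y.1) / 2 - y.1) ^ 4 + 16 * ((x.2 + 3 * y.2) / 4 - y.2) ^ 2 = s / 16 := by
      rw [hsdef, hA, hB]; ring
    rw [e1, Real.div_rpow hs (by norm_num), h16]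
  · have e2 : ((x.1 + y.1) / 2 - x.1) ^ 4 + 16 * ((x.2 + 3 * y.2) / 4 - x.2) ^ 2
        = (A ^ 4 + 144 * B ^ 2) / 16 := by
      rw [hA, hB]; ring
    rw [e2]
    have step : ((A ^ 4 + 144 * B ^ 2) / 16) ^ ((1 : ℝ) / 4) ≤ (9 * s / 16) ^ ((1 : ℝ) / 4) := by
      apply Real.rpow_le_rpow (by positivity) _ (by norm_num)
      rw [hsdef]
      have h4 : (0:ℝ) ≤ A ^ 4 := by positivity
      nlinarith [h4]
    refine step.trans (le_of_eq ?_)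
    rw [mul_div_assoc, Real.mul_rpow (by norm_num) (by positivity),
      Real.div_rpow hs (by norm_num), h16, h9]
    ring
end
end

section
/- Let c>0 and k(v̂)=8c·v₂v₃·(v₂⁴+16v₃²)^{−3/2} for v̂≠(0,0). For every integer j ≥ 0 and every α∈[0,1) with j+α>0, there exists a constant C>0 such that for every x̂∈ℝ² and every r>0, ∫_{B̂_r(x̂)} |k(x̂−ŷ)|·d̃(x̂,ŷ)^{j+α} dŷ ≤ C·r^{j+α}. -/
open MeasureTheory Filter

noncomputable section

/-- The boundary convolution kernel `k(v̂) = 8c v₂ v₃ (v₂⁴ + 16 v₃²)^{-3/2}` on `Π`. -/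
def kconv (c : ℝ) (v : ℝ × ℝ) : ℝ :=
  8 * c * v.1 * v.2 * (v.1 ^ 4 + 16 * v.2 ^ 2) ^ (-(3 : ℝ) / 2)

/-! The kernel has degree `-3` and Lebesgue measure degree `3` for the dilations
`(v₂, v₃) ↦ (λ v₂, λ² v₃)`, under which `d̃` has degree `1`: concretely, `|v₂| ≤ d̃` and
`4 |v₃| ≤ d̃²` give `|k| ≤ 2 |c| d̃⁻³` and `|B̂_ρ| ≤ ρ³`. On the dyadic annulus
`r 2⁻ⁿ⁻¹ < d̃ ≤ r 2⁻ⁿ` the integrand is therefore at most `16 |c| (r 2⁻ⁿ)^{j+α-3}` on a set of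
measure at most `(r 2⁻ⁿ)³`, and the contributions form a geometric series since `j + α > 0`. -/

lemma dt_nonneg (a b : ℝ × ℝ) : 0 ≤ dt a b := by
  unfold dt; positivity

lemma dt_pow_four (a b : ℝ × ℝ) : dt a b ^ 4 = (a.1 - b.1) ^ 4 + 16 * (a.2 - b.2) ^ 2 := by
  rw [dt, ← Real.rpow_natCast, ← Real.rpow_mul (by positivity)]
  norm_num

lemma abs_fst_sub_le_dt (a b : ℝ × ℝ) : |a.1 - b.1| ≤ dt a b := by
  refine (pow_le_pow_iff_left₀ (abs_nonneg _) (dt_nonneg a b) four_ne_zero).mp ?_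
  rw [dt_pow_four, pow_abs, abs_of_nonneg (by positivity)]
  nlinarith [sq_nonneg (a.2 - b.2)]

lemma four_mul_abs_snd_sub_le_dt_sq (a b : ℝ × ℝ) : 4 * |a.2 - b.2| ≤ dt a b ^ 2 := by
  refine (pow_le_pow_iff_left₀ (by positivity) (by positivity) two_ne_zero).mp ?_
  rw [← pow_mul, dt_pow_four, mul_pow, sq_abs]
  linarith [show 0 ≤ (a.1 - b.1) ^ 4 by positivity]

lemma measurable_dt (a : ℝ × ℝ) : Measurable (dt a) := by
  unfold dt; fun_prop

lemma abs_kconv_sub_le (c : ℝ) (a b : ℝ × ℝ) :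
    |kconv c (a - b)| ≤ 2 * |c| * dt a b ^ (-3 : ℝ) := by
  have hd := dt_nonneg a b
  have hD : ((a - b).1 ^ 4 + 16 * (a - b).2 ^ 2) ^ (-(3 : ℝ) / 2) = dt a b ^ (-6 : ℝ) := by
    rw [Prod.fst_sub, Prod.snd_sub, ← dt_pow_four, ← Real.rpow_natCast,
      ← Real.rpow_mul hd]
    norm_num
  calc |kconv c (a - b)|
      = 2 * |c| * (|a.1 - b.1| * (4 * |a.2 - b.2|)) * dt a b ^ (-6 : ℝ) := by
        rw [kconv, hD, Prod.fst_sub, Prod.snd_sub]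
        simp only [abs_mul, abs_of_nonneg (Real.rpow_nonneg hd _),
          abs_of_pos (by norm_num : (0 : ℝ) < 8)]
        ring
    _ ≤ 2 * |c| * (dt a b * dt a b ^ 2) * dt a b ^ (-6 : ℝ) := by
        gcongr
        · exact abs_fst_sub_le_dt a b
        · exact four_mul_abs_snd_sub_le_dt_sq a b
    _ = 2 * |c| * dt a b ^ (-3 : ℝ) := by
        rw [← pow_succ', ← Real.rpow_natCast, mul_assoc, ← Real.rpow_add' hd (by norm_num)]
        norm_num

lemma volume_setOf_dt_le (a : ℝ × ℝ) {ρ : ℝ} (hρ : 0 ≤ ρ) :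
    volume {b | dt a b ≤ ρ} ≤ ENNReal.ofReal (ρ ^ (3 : ℝ)) := by
  have hsub : {b | dt a b ≤ ρ} ⊆
      Set.Icc (a.1 - ρ) (a.1 + ρ) ×ˢ Set.Icc (a.2 - ρ ^ 2 / 4) (a.2 + ρ ^ 2 / 4) := by
    intro b hb
    have h1 := (abs_fst_sub_le_dt a b).trans hb
    have h2 := (four_mul_abs_snd_sub_le_dt_sq a b).trans (pow_le_pow_left₀ (dt_nonneg a b) hb 2)
    have h2' : |a.2 - b.2| ≤ ρ ^ 2 / 4 := by linarith
    rw [abs_le] at h1 h2'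
    simp only [Set.mem_prod, Set.mem_Icc]
    constructor <;> constructor <;> linarith
  calc volume {b | dt a b ≤ ρ}
      ≤ volume (Set.Icc (a.1 - ρ) (a.1 + ρ)) *
          volume (Set.Icc (a.2 - ρ ^ 2 / 4) (a.2 + ρ ^ 2 / 4)) := by
        rw [Measure.volume_eq_prod, ← Measure.prod_prod]; exact measure_mono hsub
    _ = ENNReal.ofReal (ρ ^ (3 : ℝ)) := by
        rw [Real.volume_Icc, Real.volume_Icc, ← ENNReal.ofReal_mul (by linarith)]
        rw [show (3 : ℝ) = (3 : ℕ) by norm_num, Real.rpow_natCast]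
        ring_nf

lemma exists_mem_Ioc_half_mul_inv_two_pow {t r : ℝ} (ht : 0 < t) (htr : t ≤ r) :
    ∃ n : ℕ, t ∈ Set.Ioc (r * 2⁻¹ ^ n / 2) (r * 2⁻¹ ^ n) := by
  have hr : 0 < r := ht.trans_le htr
  obtain ⟨n, hlow, hupp⟩ := exists_nat_pow_near_of_lt_one (div_pos ht hr)
    ((div_le_one hr).2 htr) (by norm_num : (0 : ℝ) < 2⁻¹) (by norm_num)
  rw [lt_div_iff₀ hr, pow_succ] at hlow
  rw [div_le_iff₀ hr] at hupp
  exact ⟨n, by linarith, by linarith⟩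

section DyadicAnnuli

variable {X : Type*} {d g : X → ℝ} {Q β A : ℝ}

lemma mul_rpow_le_of_mem_Ioc (hQ : 0 ≤ Q) (hβ : 0 ≤ β) (hA : 0 ≤ A)
    (hg : ∀ y, 0 < d y → g y ≤ A * d y ^ (-Q)) {ρ : ℝ} (hρ : 0 < ρ) {y : X}
    (hy : d y ∈ Set.Ioc (ρ / 2) ρ) :
    g y * d y ^ β ≤ 2 ^ Q * A * ρ ^ β * ρ ^ (-Q) := by
  have hdy : 0 < d y := (half_pos hρ).trans hy.1
  calc g y * d y ^ β
      ≤ A * d y ^ (-Q) * d y ^ β := by gcongr; exact hg y hdy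
    _ ≤ A * (ρ / 2) ^ (-Q) * ρ ^ β := by
        gcongr A * ?_ * ?_
        · exact Real.rpow_le_rpow_of_nonpos (half_pos hρ) hy.1.le (neg_nonpos.2 hQ)
        · exact Real.rpow_le_rpow hdy.le hy.2 hβ
    _ = 2 ^ Q * A * ρ ^ β * ρ ^ (-Q) := by
        rw [Real.div_rpow hρ.le zero_le_two, Real.rpow_neg zero_le_two, div_inv_eq_mul]
        ring

variable [MeasurableSpace X] {μ : Measure X}

lemma setLIntegral_preimage_Ioc_le (hd : Measurable d) (hQ : 0 ≤ Q) (hβ : 0 ≤ β) (hA : 0 ≤ A)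
    (hvol : ∀ ρ > 0, μ {y | d y ≤ ρ} ≤ ENNReal.ofReal (ρ ^ Q))
    (hg : ∀ y, 0 < d y → g y ≤ A * d y ^ (-Q)) {ρ : ℝ} (hρ : 0 < ρ) :
    ∫⁻ y in d ⁻¹' Set.Ioc (ρ / 2) ρ, ENNReal.ofReal (g y * d y ^ β) ∂μ ≤
      ENNReal.ofReal (2 ^ Q * A * ρ ^ β) := by
  calc ∫⁻ y in d ⁻¹' Set.Ioc (ρ / 2) ρ, ENNReal.ofReal (g y * d y ^ β) ∂μ
      ≤ ∫⁻ _ in d ⁻¹' Set.Ioc (ρ / 2) ρ, ENNReal.ofReal (2 ^ Q * A * ρ ^ β * ρ ^ (-Q)) ∂μ :=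
        setLIntegral_mono' (hd measurableSet_Ioc) fun y hy ↦
          ENNReal.ofReal_le_ofReal (mul_rpow_le_of_mem_Ioc hQ hβ hA hg hρ hy)
    _ ≤ ENNReal.ofReal (2 ^ Q * A * ρ ^ β * ρ ^ (-Q)) * ENNReal.ofReal (ρ ^ Q) := by
        rw [setLIntegral_const]
        gcongr
        exact (measure_mono fun y hy ↦ hy.2).trans (hvol ρ hρ)
    _ = ENNReal.ofReal (2 ^ Q * A * ρ ^ β) := by
        rw [← ENNReal.ofReal_mul (by positivity), mul_assoc, ← Real.rpow_add hρ]
        simp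

theorem setLIntegral_ofReal_mul_rpow_le (hd : Measurable d) (hd0 : ∀ y, 0 ≤ d y) (hQ : 0 ≤ Q)
    (hβ : 0 < β) (hA : 0 ≤ A) (hvol : ∀ ρ > 0, μ {y | d y ≤ ρ} ≤ ENNReal.ofReal (ρ ^ Q))
    (hg : ∀ y, 0 < d y → g y ≤ A * d y ^ (-Q)) {r : ℝ} (hr : 0 < r) :
    ∫⁻ y in {y | d y ≤ r}, ENNReal.ofReal (g y * d y ^ β) ∂μ ≤
      ENNReal.ofReal (2 ^ Q * A / (1 - 2⁻¹ ^ β) * r ^ β) := by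
  have hq0 : 0 ≤ (2⁻¹ : ℝ) ^ β := by positivity
  have hq1 : (2⁻¹ : ℝ) ^ β < 1 := Real.rpow_lt_one (by norm_num) (by norm_num) hβ
  have hcover : {y | d y ≤ r} ⊆
      {y | d y ≤ 0} ∪ ⋃ n : ℕ, d ⁻¹' Set.Ioc (r * 2⁻¹ ^ n / 2) (r * 2⁻¹ ^ n) := by
    intro y hy
    rcases (hd0 y).eq_or_lt with h0 | hpos
    · exact Or.inl h0.ge
    · exact Or.inr (Set.mem_iUnion.2 (exists_mem_Ioc_half_mul_inv_two_pow hpos hy))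
  have hcentre : ∫⁻ y in {y | d y ≤ 0}, ENNReal.ofReal (g y * d y ^ β) ∂μ = 0 := by
    refine (setLIntegral_congr_fun (measurableSet_le hd measurable_const) fun y hy ↦ ?_).trans
      lintegral_zero
    simp [le_antisymm hy (hd0 y), Real.zero_rpow hβ.ne']
  have hannulus (n : ℕ) :
      ∫⁻ y in d ⁻¹' Set.Ioc (r * 2⁻¹ ^ n / 2) (r * 2⁻¹ ^ n), ENNReal.ofReal (g y * d y ^ β) ∂μ ≤
        ENNReal.ofReal (2 ^ Q * A * r ^ β * (2⁻¹ ^ β) ^ n) := by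
    refine (setLIntegral_preimage_Ioc_le hd hQ hβ.le hA hvol hg (by positivity)).trans_eq ?_
    rw [Real.mul_rpow hr.le (by positivity), ← Real.rpow_pow_comm (by norm_num)]
    congr 1
    ring
  calc ∫⁻ y in {y | d y ≤ r}, ENNReal.ofReal (g y * d y ^ β) ∂μ
      ≤ ∑' n : ℕ, ∫⁻ y in d ⁻¹' Set.Ioc (r * 2⁻¹ ^ n / 2) (r * 2⁻¹ ^ n),
          ENNReal.ofReal (g y * d y ^ β) ∂μ := by
        refine (lintegral_mono_set hcover).trans ((lintegral_union_le _ _ _).trans ?_)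
        rw [hcentre, zero_add]
        exact lintegral_iUnion_le _ _
    _ ≤ ∑' n : ℕ, ENNReal.ofReal (2 ^ Q * A * r ^ β * (2⁻¹ ^ β) ^ n) :=
        ENNReal.tsum_le_tsum hannulus
    _ = ENNReal.ofReal (2 ^ Q * A / (1 - 2⁻¹ ^ β) * r ^ β) := by
        rw [← ENNReal.ofReal_tsum_of_nonneg (fun n ↦ by positivity)
          ((summable_geometric_of_lt_one hq0 hq1).mul_left _), tsum_mul_left,
          tsum_geometric_of_lt_one hq0 hq1]
        congr 1
        ring

end DyadicAnnuli

theorem stmt8_general (c : ℝ) (hc : 0 < c) (j : ℕ) (α : ℝ)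
    (hjα : 0 < (j : ℝ) + α) :
    ∃ C > (0 : ℝ), ∀ x0 : ℝ × ℝ, ∀ r > (0 : ℝ),
      ∫⁻ y in bhat r x0, ENNReal.ofReal (|kconv c (x0 - y)| * dt x0 y ^ ((j : ℝ) + α)) ≤
        ENNReal.ofReal (C * r ^ ((j : ℝ) + α)) := by
  have hq : (2⁻¹ : ℝ) ^ ((j : ℝ) + α) < 1 := Real.rpow_lt_one (by norm_num) (by norm_num) hjα
  refine ⟨2 ^ (3 : ℝ) * (2 * |c|) / (1 - 2⁻¹ ^ ((j : ℝ) + α)),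
    div_pos (by positivity) (sub_pos.2 hq), fun x0 r hr ↦ ?_⟩
  calc ∫⁻ y in bhat r x0, ENNReal.ofReal (|kconv c (x0 - y)| * dt x0 y ^ ((j : ℝ) + α))
      ≤ ∫⁻ y in {y | dt x0 y ≤ r},
          ENNReal.ofReal (|kconv c (x0 - y)| * dt x0 y ^ ((j : ℝ) + α)) :=
        lintegral_mono_set fun y (hy : dt x0 y < r) ↦ hy.le
    _ ≤ _ := setLIntegral_ofReal_mul_rpow_le (measurable_dt x0) (dt_nonneg x0) zero_le_three hjα
        (by positivity) (fun _ hρ ↦ volume_setOf_dt_le x0 hρ.le)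
        (fun y _ ↦ abs_kconv_sub_le c x0 y) hr

/-- Uniform integral bounds for the boundary kernel against powers
of the homogeneous distance on homogeneous balls. -/
theorem stmt8 (c : ℝ) (hc : 0 < c) (j : ℕ) (α : ℝ) (hα0 : 0 ≤ α) (hα1 : α < 1)
    (hjα : 0 < (j : ℝ) + α) :
    ∃ C > (0 : ℝ), ∀ x0 : ℝ × ℝ, ∀ r > (0 : ℝ),
      ∫⁻ y in bhat r x0, ENNReal.ofReal (|kconv c (x0 - y)| * dt x0 y ^ ((j : ℝ) + α)) ≤
        ENNReal.ofReal (C * r ^ ((j : ℝ) + α)) :=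
  stmt8_general c hc j α hjα
end
end
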